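/- arXiv:2409.16234 — 4 statements merged into one kernel-verified Lean document; each statement's English description precedes it below -/
import Mathlib

section
/- Let n ≥ 1 and r ≥ 1, let α(0), …, α(r) ∈ ℕ^n be affinely independent points, let λ_0, …, λ_r ∈ (0,1) with λ_0 + … + λ_r = 1 be such that β := λ_0·α(0) + … + λ_r·α(r) lies in ℕ^n, let c_0, …, c_r > 0 be real and c_β ∈ ℝ. Define the circuit number Θ = ∏_{i=0}^{r} (c_i/λ_i)^{λ_i}. Then the polynomial f(x) = c_β·x^β + Σ_{i=0}^{r} c_i·x^{α(i)} satisfies f(x) ≥ 0 for all x ∈ ℝ_{>0}^n if and only if −c_β ≤ Θ. -/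
/-!
Write `x = exp y`. The monomials become `exp ⟪α(i), y⟫` and, since `β = ∑ λᵢ α(i)`,
`x^β = exp (∑ λᵢ ⟪α(i), y⟫)`. Weighted AM-GM applied to the numbers `(cᵢ / λᵢ) x^{α(i)}` with
weights `λᵢ` gives `∑ cᵢ x^{α(i)} ≥ Θ x^β`, so `f ≥ (c_β + Θ) x^β`. Conversely, affine
independence of the `α(i)` lets us choose `y` with `⟪α(i), y⟫ + log (cᵢ / λᵢ)` independent of `i`;
then AM-GM is an equality and `f(x) = (c_β + Θ) x^β`.
-/

open Finset Real Matrix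

section Interpolation

variable {K : Type*} [Field K] {ι m : Type*} [Finite ι] [Fintype m]

theorem LinearIndependent.exists_forall_dotProduct_eq {v : ι → m → K}
    (hv : LinearIndependent K v) (t : ι → K) : ∃ y : m → K, ∀ i, v i ⬝ᵥ y = t i := by
  have ht : t ∈ Submodule.span K (Set.range (flip v)) := by
    rw [span_flip_eq_top_iff_linearIndependent.mpr hv]; trivial
  obtain ⟨y, hy⟩ := (Submodule.mem_span_range_iff_exists_fun K).mp ht
  refine ⟨y, fun i => ?_⟩
  rw [← hy, Finset.sum_apply]
  simp [dotProduct, flip, mul_comm]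

theorem AffineIndependent.exists_forall_dotProduct_add_eq {p : ι → m → K}
    (hp : AffineIndependent K p) (t : ι → K) :
    ∃ (y : m → K) (b : K), ∀ i, p i ⬝ᵥ y + b = t i := by
  rcases isEmpty_or_nonempty ι with hι | ⟨⟨i₀⟩⟩
  · exact ⟨0, 0, isEmptyElim⟩
  have hli := (affineIndependent_iff_linearIndependent_vsub K p i₀).mp hp
  obtain ⟨y, hy⟩ := hli.exists_forall_dotProduct_eq fun i => t i - t i₀
  refine ⟨y, t i₀ - p i₀ ⬝ᵥ y, fun i => ?_⟩
  by_cases hi : i = i₀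
  · subst hi; ring
  · have := hy ⟨i, hi⟩
    simp only [vsub_eq_sub, sub_dotProduct] at this
    linear_combination this

end Interpolation

section AMGM

variable {ι : Type*} [Fintype ι] {w c : ι → ℝ}

noncomputable def circuitNumber (c w : ι → ℝ) : ℝ := ∏ i, (c i / w i) ^ w i

lemma prod_div_mul_exp_rpow (hw : ∀ i, 0 < w i) (hc : ∀ i, 0 < c i) (A : ι → ℝ) :
    ∏ i, (c i / w i * exp (A i)) ^ w i = circuitNumber c w * exp (∑ i, w i * A i) := by
  rw [circuitNumber, exp_sum, ← prod_mul_distrib]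
  refine prod_congr rfl fun i _ => ?_
  rw [mul_rpow (div_pos (hc i) (hw i)).le (exp_pos _).le, ← exp_mul, mul_comm (A i)]

lemma sum_mul_div_mul_exp (hw : ∀ i, w i ≠ 0) (A : ι → ℝ) :
    ∑ i, w i * (c i / w i * exp (A i)) = ∑ i, c i * exp (A i) :=
  sum_congr rfl fun i _ => by rw [← mul_assoc, mul_div_cancel₀ _ (hw i)]

theorem circuitNumber_mul_exp_le_sum (hw : ∀ i, 0 < w i) (hw1 : ∑ i, w i = 1)
    (hc : ∀ i, 0 < c i) (A : ι → ℝ) :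
    circuitNumber c w * exp (∑ i, w i * A i) ≤ ∑ i, c i * exp (A i) := by
  rw [← prod_div_mul_exp_rpow hw hc, ← sum_mul_div_mul_exp (fun i => (hw i).ne')]
  exact geom_mean_le_arith_mean_weighted _ _ _ (fun i _ => (hw i).le) hw1
    fun i _ => (mul_pos (div_pos (hc i) (hw i)) (exp_pos _)).le

theorem circuitNumber_mul_exp_eq_sum (hw : ∀ i, 0 < w i) (hw1 : ∑ i, w i = 1)
    (hc : ∀ i, 0 < c i) {A : ι → ℝ} {b : ℝ} (hA : ∀ i, A i + log (c i / w i) = b) :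
    circuitNumber c w * exp (∑ i, w i * A i) = ∑ i, c i * exp (A i) := by
  rw [← prod_div_mul_exp_rpow hw hc, ← sum_mul_div_mul_exp (fun i => (hw i).ne')]
  refine geom_mean_eq_arith_mean_weighted_of_constant _ _ _ (exp b) (fun i _ => (hw i).le) hw1
    (fun i _ => (mul_pos (div_pos (hc i) (hw i)) (exp_pos _)).le) fun i _ _ => ?_
  rw [← hA i, exp_add, exp_log (div_pos (hc i) (hw i)), mul_comm]

end AMGM

lemma prod_exp_pow {m : Type*} [Fintype m] (y : m → ℝ) (a : m → ℕ) :
    ∏ j, exp (y j) ^ a j = exp ((fun j => (a j : ℝ)) ⬝ᵥ y) := by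
  rw [dotProduct, exp_sum]
  exact prod_congr rfl fun j _ => by rw [← exp_nat_mul]

theorem circuit_polynomial_nonneg_iff_circuit_number_general
    (n r : ℕ)
    (α : Fin (r + 1) → Fin n → ℕ)
    (hα : AffineIndependent ℝ (fun i : Fin (r + 1) => (fun j : Fin n => (α i j : ℝ))))
    (lam : Fin (r + 1) → ℝ)
    (hlam : ∀ i, 0 < lam i ∧ lam i < 1)
    (hsum : ∑ i, lam i = 1)
    (β : Fin n → ℕ)
    (hβ : ∀ j, (β j : ℝ) = ∑ i, lam i * (α i j : ℝ))
    (c : Fin (r + 1) → ℝ) (hc : ∀ i, 0 < c i) (cβ : ℝ) :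
    (∀ x : Fin n → ℝ, (∀ j, 0 < x j) →
        0 ≤ cβ * ∏ j, x j ^ (β j) + ∑ i, c i * ∏ j, x j ^ (α i j)) ↔
      -cβ ≤ ∏ i, (c i / lam i) ^ (lam i) := by
  set p : Fin (r + 1) → Fin n → ℝ := fun i j => α i j
  have hlam0 : ∀ i, 0 < lam i := fun i => (hlam i).1
  have hβp : (fun j => (β j : ℝ)) = ∑ i, lam i • p i := by
    ext j; simp [hβ, p]
  have hf : ∀ y : Fin n → ℝ,
      cβ * ∏ j, exp (y j) ^ β j + ∑ i, c i * ∏ j, exp (y j) ^ α i j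
        = cβ * exp (∑ i, lam i * (p i ⬝ᵥ y)) + ∑ i, c i * exp (p i ⬝ᵥ y) := by
    intro y
    simp only [prod_exp_pow, hβp, sum_dotProduct, smul_dotProduct, smul_eq_mul, p]
  change _ ↔ -cβ ≤ circuitNumber c lam
  constructor
  · intro hnonneg
    obtain ⟨y, b, hy⟩ := hα.exists_forall_dotProduct_add_eq fun i => -log (c i / lam i)
    have h := hnonneg (fun j => exp (y j)) fun j => exp_pos _
    rw [hf, ← circuitNumber_mul_exp_eq_sum hlam0 hsum hc (b := -b) fun i => by linarith [hy i]]
      at h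
    nlinarith [exp_pos (∑ i, lam i * (p i ⬝ᵥ y))]
  · intro hΘ x hx
    have h := hf fun j => log (x j)
    simp only [exp_log (hx _)] at h
    rw [h]
    nlinarith [exp_pos (∑ i, lam i * (p i ⬝ᵥ fun j => log (x j))),
      circuitNumber_mul_exp_le_sum hlam0 hsum hc fun i => p i ⬝ᵥ fun j => log (x j)]

/-- Nonnegativity of a circuit polynomial on the positive orthant is
equivalent to `-c_β ≤ Θ`, where `Θ` is the circuit number. -/
theorem circuit_polynomial_nonneg_iff_circuit_number
    (n r : ℕ) (hn : 1 ≤ n) (hr : 1 ≤ r)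
    (α : Fin (r + 1) → Fin n → ℕ)
    (hα : AffineIndependent ℝ (fun i : Fin (r + 1) => (fun j : Fin n => (α i j : ℝ))))
    (lam : Fin (r + 1) → ℝ)
    (hlam : ∀ i, 0 < lam i ∧ lam i < 1)
    (hsum : ∑ i, lam i = 1)
    (β : Fin n → ℕ)
    (hβ : ∀ j, (β j : ℝ) = ∑ i, lam i * (α i j : ℝ))
    (c : Fin (r + 1) → ℝ) (hc : ∀ i, 0 < c i) (cβ : ℝ) :
    (∀ x : Fin n → ℝ, (∀ j, 0 < x j) →
        0 ≤ cβ * ∏ j, x j ^ (β j) + ∑ i, c i * ∏ j, x j ^ (α i j)) ↔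
      -cβ ≤ ∏ i, (c i / lam i) ^ (lam i) :=
  circuit_polynomial_nonneg_iff_circuit_number_general n r α hα lam hlam hsum β hβ c hc cβ
end

section
/- Let K1, K2, K3, K4, κ3, κ6, κ9, κ12 > 0 be real parameters with a(η) := κ3·κ12 − κ6·κ9 > 0 and b(η) := (K2+K3)·κ3·κ12 − (K1+K4)·κ6·κ9. Then the polynomial f(x1,x3) = b(η)·K1·K2·K3·κ3·κ6·κ12·x1^2·x3 + K1^2·K2·K3·K4·κ3·κ6^2·κ9·κ12·x1^2 + K1^2·K3^2·κ6^3·κ12^2·x3 + a(η)·K2^2·K4·κ3^2·κ9·x1^4·x3^2 satisfies f(x1,x3) ≥ 0 for all x1 > 0, x3 > 0 if and only if −b(η)·K1·K2·K3·κ3·κ6·κ12 ≤ 3·K1·K2·K3·κ3·κ6·κ12·(K1·K4^2·κ6^2·κ9^2·a(η))^{1/3}. -/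
/-!
Write `f = θ·x1²x3 + A·x1² + B·x3 + C·x1⁴x3²` and `r = (ABC)^{1/3}`. Since
`(2,1) = ⅓((2,0) + (0,1) + (4,2))`, the product of the three outer terms is `(r·x1²x3)³`, so AM–GM
gives `f ≥ (θ + 3r)·x1²x3`. Conversely, at `x1² = B/r`, `x3 = A/r` the three outer terms coincide,
AM–GM is tight and `f = AB/r²·(θ + 3r)`. For the coefficients at hand,
`ABC = (K1K2K3κ3κ6κ12)³ · K1K4²κ6²κ9²a(η)`.
-/

namespace Real

lemma rpow_one_div_three_pow_three {x : ℝ} (hx : 0 ≤ x) : (x ^ ((1 : ℝ) / 3)) ^ 3 = x := by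
  simpa [one_div] using rpow_inv_natCast_pow hx (n := 3) three_ne_zero

lemma pow_three_mul_rpow_one_div_three {c d : ℝ} (hc : 0 ≤ c) (hd : 0 ≤ d) :
    (c ^ 3 * d) ^ ((1 : ℝ) / 3) = c * d ^ ((1 : ℝ) / 3) := by
  rw [mul_rpow (by positivity) hd, one_div]
  congr 1
  simpa using pow_rpow_inv_natCast hc (n := 3) three_ne_zero

lemma three_mul_le_add_add_of_mul_mul_eq_pow_three {p q s t : ℝ} (hp : 0 ≤ p) (hq : 0 ≤ q)
    (hs : 0 ≤ s) (ht : 0 ≤ t) (h : p * q * s = t ^ 3) : 3 * t ≤ p + q + s := by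
  have ht' : t = p ^ ((1 : ℝ) / 3) * q ^ ((1 : ℝ) / 3) * s ^ ((1 : ℝ) / 3) := by
    rw [← mul_rpow hp hq, ← mul_rpow (by positivity) hs, h, one_div]
    simpa using (pow_rpow_inv_natCast ht (n := 3) three_ne_zero).symm
  have := geom_mean_le_arith_mean3_weighted (w₁ := 1 / 3) (w₂ := 1 / 3) (w₃ := 1 / 3)
    (by norm_num) (by norm_num) (by norm_num) hp hq hs (by norm_num)
  linarith

end Real

open Real

section Circuit

variable {A B C θ : ℝ}

lemma circuit_nonneg_of_neg_le (hA : 0 ≤ A) (hB : 0 ≤ B) (hC : 0 ≤ C)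
    (h : -θ ≤ 3 * (A * B * C) ^ ((1 : ℝ) / 3)) {x y : ℝ} (hy : 0 ≤ y) :
    0 ≤ θ * x ^ 2 * y + A * x ^ 2 + B * y + C * x ^ 4 * y ^ 2 := by
  set r := (A * B * C) ^ ((1 : ℝ) / 3)
  have hr3 : r ^ 3 = A * B * C := rpow_one_div_three_pow_three (by positivity)
  have hamgm : 3 * (r * (x ^ 2 * y)) ≤ A * x ^ 2 + B * y + C * x ^ 4 * y ^ 2 :=
    three_mul_le_add_add_of_mul_mul_eq_pow_three (by positivity) (by positivity)
      (by positivity) (by positivity) (by linear_combination -(x ^ 6 * y ^ 3) * hr3)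
  nlinarith [mul_le_mul_of_nonneg_right h (by positivity : 0 ≤ x ^ 2 * y)]

lemma circuit_eval_balance {r x : ℝ} (hr : r ≠ 0) (hr3 : r ^ 3 = A * B * C) (hx : x ^ 2 = B / r) :
    θ * x ^ 2 * (A / r) + A * x ^ 2 + B * (A / r) + C * x ^ 4 * (A / r) ^ 2
      = A * B / r ^ 2 * (θ + 3 * r) := by
  rw [show x ^ 4 = (x ^ 2) ^ 2 by ring, hx]
  field_simp
  linear_combination -(A * B) * hr3

lemma neg_le_of_circuit_nonneg (hA : 0 < A) (hB : 0 < B) (hC : 0 < C)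
    (h : ∀ x y : ℝ, 0 < x → 0 < y → 0 ≤ θ * x ^ 2 * y + A * x ^ 2 + B * y + C * x ^ 4 * y ^ 2) :
    -θ ≤ 3 * (A * B * C) ^ ((1 : ℝ) / 3) := by
  set r := (A * B * C) ^ ((1 : ℝ) / 3)
  have hr : 0 < r := rpow_pos_of_pos (by positivity) _
  have hr3 : r ^ 3 = A * B * C := rpow_one_div_three_pow_three (by positivity)
  obtain ⟨x, hx, hx2⟩ : ∃ x : ℝ, 0 < x ∧ x ^ 2 = B / r :=
    ⟨√(B / r), by positivity, sq_sqrt (by positivity)⟩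
  have hval := h x (A / r) hx (by positivity)
  rw [circuit_eval_balance hr.ne' hr3 hx2] at hval
  linarith [nonneg_of_mul_nonneg_right hval (by positivity)]

theorem circuit_nonneg_iff (hA : 0 < A) (hB : 0 < B) (hC : 0 < C) :
    (∀ x y : ℝ, 0 < x → 0 < y → 0 ≤ θ * x ^ 2 * y + A * x ^ 2 + B * y + C * x ^ 4 * y ^ 2) ↔
      -θ ≤ 3 * (A * B * C) ^ ((1 : ℝ) / 3) :=
  ⟨neg_le_of_circuit_nonneg hA hB hC, fun h _ _ _ hy =>
    circuit_nonneg_of_neg_le hA.le hB.le hC.le h hy.le⟩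

end Circuit

/-- The circuit polynomial `f_{η,H}` from Example 3.3 is nonnegative on the
positive orthant if and only if
`−b(η)·K1·K2·K3·κ3·κ6·κ12 ≤ 3·K1·K2·K3·κ3·κ6·κ12·(K1·K4²·κ6²·κ9²·a(η))^{1/3}`. -/
theorem circuit_f_etaH_nonneg_iff
    (K1 K2 K3 K4 κ3 κ6 κ9 κ12 : ℝ)
    (hK1 : 0 < K1) (hK2 : 0 < K2) (hK3 : 0 < K3) (hK4 : 0 < K4)
    (hκ3 : 0 < κ3) (hκ6 : 0 < κ6) (hκ9 : 0 < κ9) (hκ12 : 0 < κ12)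
    (ha : 0 < κ3 * κ12 - κ6 * κ9) :
    (∀ x1 x3 : ℝ, 0 < x1 → 0 < x3 →
        0 ≤ ((K2 + K3) * κ3 * κ12 - (K1 + K4) * κ6 * κ9) * K1 * K2 * K3 * κ3 * κ6 * κ12
              * x1 ^ 2 * x3
            + K1 ^ 2 * K2 * K3 * K4 * κ3 * κ6 ^ 2 * κ9 * κ12 * x1 ^ 2
            + K1 ^ 2 * K3 ^ 2 * κ6 ^ 3 * κ12 ^ 2 * x3
            + (κ3 * κ12 - κ6 * κ9) * K2 ^ 2 * K4 * κ3 ^ 2 * κ9 * x1 ^ 4 * x3 ^ 2) ↔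
      -(((K2 + K3) * κ3 * κ12 - (K1 + K4) * κ6 * κ9) * K1 * K2 * K3 * κ3 * κ6 * κ12)
        ≤ 3 * K1 * K2 * K3 * κ3 * κ6 * κ12
            * (K1 * K4 ^ 2 * κ6 ^ 2 * κ9 ^ 2 * (κ3 * κ12 - κ6 * κ9)) ^ ((1 : ℝ) / 3) := by
  rw [circuit_nonneg_iff (by positivity) (by positivity) (by positivity)]
  have hprod : K1 ^ 2 * K2 * K3 * K4 * κ3 * κ6 ^ 2 * κ9 * κ12 * (K1 ^ 2 * K3 ^ 2 * κ6 ^ 3 * κ12 ^ 2)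
        * ((κ3 * κ12 - κ6 * κ9) * K2 ^ 2 * K4 * κ3 ^ 2 * κ9)
      = (K1 * K2 * K3 * κ3 * κ6 * κ12) ^ 3 * (K1 * K4 ^ 2 * κ6 ^ 2 * κ9 ^ 2 * (κ3 * κ12 - κ6 * κ9)) := by
    ring
  rw [hprod, pow_three_mul_rpow_one_div_three (by positivity) (by positivity)]
  simp only [mul_assoc]
end

section
/- Every pure cover of V consists either of exactly five 2-element subsets, or of exactly two 2-element subsets and exactly two 3-element subsets. -/
/-!
Only the counting matters: the parts partition the ten points of `V`, so if `a` parts have two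
points and `b` have three, then `2a + 3b = 10`, whose only solutions are `(5, 0)` and `(2, 2)`.
-/

/-- The lattice points of the hexagon with vertices `(0,0), (2,0), (4,1), (4,2), (2,2), (0,1)`,
other than the center point `m = (2,1)`. -/
noncomputable def hexV : Finset (ℝ × ℝ) :=
  {(0, 0), (2, 0), (4, 1), (4, 2), (2, 2), (0, 1), (1, 0), (3, 2), (1, 1), (3, 1)}

/-- A pure cover: a partition of `hexV` into subsets `S` of cardinality 2 or 3 whose points
are affinely independent and such that `(2,1)` lies in the relative interior of the
convex hull of `S`. -/
def IsPureCover (P : Finset (Finset (ℝ × ℝ))) : Prop :=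
  (∀ S ∈ P, S ⊆ hexV ∧ (S.card = 2 ∨ S.card = 3) ∧
      AffineIndependent ℝ (fun p : (S : Set (ℝ × ℝ)) => (p : ℝ × ℝ)) ∧
      ((2, 1) : ℝ × ℝ) ∈ intrinsicInterior ℝ (convexHull ℝ (S : Set (ℝ × ℝ)))) ∧
    (∀ v ∈ hexV, ∃! S, S ∈ P ∧ v ∈ S)

open Finset

theorem Finset.sum_card_eq_card_of_existsUnique {α : Type*} {s : Finset α}
    {P : Finset (Finset α)} (hsub : ∀ S ∈ P, S ⊆ s) (hcover : ∀ a ∈ s, ∃! S, S ∈ P ∧ a ∈ S) :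
    ∑ S ∈ P, #S = #s := by
  classical
  have hone : ∀ a ∈ s, #{S ∈ P | a ∈ S} = 1 := by
    intro a ha
    obtain ⟨S, hS, huniq⟩ := hcover a ha
    exact card_eq_one.2 ⟨S, eq_singleton_iff_unique_mem.2
      ⟨mem_filter.2 hS, fun T hT => huniq T (mem_filter.1 hT)⟩⟩
  calc ∑ S ∈ P, #S = ∑ S ∈ P, #(s ∩ S) :=
        sum_congr rfl fun S hS => by rw [inter_eq_right.2 (hsub S hS)]
    _ = #s := by rw [sum_card_inter hone, mul_one]

theorem Finset.sum_card_eq_of_card_eq_or {α : Type*} {P : Finset (Finset α)} {m n : ℕ}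
    (hmn : m ≠ n) (hP : ∀ S ∈ P, #S = m ∨ #S = n) :
    ∑ S ∈ P, #S = m * #{S ∈ P | #S = m} + n * #{S ∈ P | #S = n} := by
  have hnot : {S ∈ P | ¬ #S = m} = {S ∈ P | #S = n} :=
    filter_congr fun S hS => by rcases hP S hS with h | h <;> simp [h, hmn, hmn.symm]
  rw [← sum_filter_add_sum_filter_not P (fun S => #S = m), hnot,
    sum_congr rfl fun S hS => (mem_filter.1 hS).2,
    sum_congr rfl fun S hS => (mem_filter.1 hS).2, sum_const, sum_const, smul_eq_mul,
    smul_eq_mul, mul_comm m, mul_comm n]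

theorem hexV_card : #hexV = 10 := by
  simp [hexV, Prod.ext_iff]

/-- Every pure cover consists either of exactly five 2-element subsets,
or of exactly two 2-element subsets and exactly two 3-element subsets. -/
theorem pure_cover_shape (P : Finset (Finset (ℝ × ℝ))) (hP : IsPureCover P) :
    ((P.filter (fun S => S.card = 2)).card = 5 ∧
        (P.filter (fun S => S.card = 3)).card = 0) ∨
      ((P.filter (fun S => S.card = 2)).card = 2 ∧
        (P.filter (fun S => S.card = 3)).card = 2) := by
  obtain ⟨hparts, hcover⟩ := hP
  have hsum : 2 * #{S ∈ P | #S = 2} + 3 * #{S ∈ P | #S = 3} = 10 := by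
    rw [← sum_card_eq_of_card_eq_or (by norm_num) fun S hS => (hparts S hS).2.1, ← hexV_card]
    exact sum_card_eq_card_of_existsUnique (fun S hS => (hparts S hS).1) hcover
  omega
end

section
/- Let c ∈ ℝ and w ∈ (0,1). If c ≤ 3·w^{1/3} + 2·(1−w)^{1/2}, then g(x,y) = x^4·y^2 + x^2 + y + 1 − c·x^2·y satisfies g(x,y) ≥ 0 for all x > 0, y > 0. -/
/-! Split the leading coefficient as `w + (1 - w)` and write `t = x²y`. Weighted AM-GM on the
circuit `w·x⁴y², x², y` (whose product is `w·t³`) gives `w·x⁴y² + x² + y ≥ 3·w^{1/3}·t`, and on the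
circuit `(1-w)·x⁴y², 1` it gives `(1-w)·x⁴y² + 1 ≥ 2·(1-w)^{1/2}·t`. Summing, `g ≥ (3·w^{1/3} +
2·(1-w)^{1/2} - c)·t ≥ 0`. -/

open Real

lemma three_mul_rpow_one_third_mul_le {w u v : ℝ} (hw : 0 ≤ w) (hu : 0 ≤ u) (hv : 0 ≤ v) :
    3 * w ^ ((1 : ℝ) / 3) * (u * v) ≤ w * (u * v) ^ 2 + u + v := by
  have hgeom : (w * (u * v) ^ 2) ^ ((1 : ℝ) / 3) * u ^ ((1 : ℝ) / 3) * v ^ ((1 : ℝ) / 3)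
      = w ^ ((1 : ℝ) / 3) * (u * v) := by
    rw [← mul_rpow (by positivity) hu, ← mul_rpow (by positivity) hv,
      show w * (u * v) ^ 2 * u * v = w * (u * v) ^ 3 by ring, mul_rpow hw (by positivity),
      one_div, show (3 : ℝ)⁻¹ = ((3 : ℕ) : ℝ)⁻¹ by norm_num,
      pow_rpow_inv_natCast (by positivity) three_ne_zero]
  have hamgm := geom_mean_le_arith_mean3_weighted (w₁ := 1 / 3) (w₂ := 1 / 3) (w₃ := 1 / 3)
    (p₁ := w * (u * v) ^ 2) (by norm_num) (by norm_num) (by norm_num) (by positivity) hu hv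
    (by norm_num)
  linarith

lemma two_mul_rpow_one_half_mul_le {w : ℝ} (hw : 0 ≤ w) (t : ℝ) :
    2 * w ^ ((1 : ℝ) / 2) * t ≤ w * t ^ 2 + 1 := by
  rw [← sqrt_eq_rpow]
  nlinarith [sq_nonneg (√w * t - 1), sq_sqrt hw]

/-- The weighted-cover sufficient condition for nonnegativity of
`g(x,y) = x⁴y² + x² + y + 1 − c·x²y` on the positive orthant. -/
theorem weighted_cover_example (c w : ℝ) (hw0 : 0 < w) (hw1 : w < 1)
    (hc : c ≤ 3 * w ^ ((1 : ℝ) / 3) + 2 * (1 - w) ^ ((1 : ℝ) / 2)) :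
    ∀ x y : ℝ, 0 < x → 0 < y →
      0 ≤ x ^ 4 * y ^ 2 + x ^ 2 + y + 1 - c * x ^ 2 * y := by
  intro x y hx hy
  have hcircuit₁ := three_mul_rpow_one_third_mul_le hw0.le (sq_nonneg x) hy.le
  have hcircuit₂ := two_mul_rpow_one_half_mul_le (sub_nonneg.mpr hw1.le) (x ^ 2 * y)
  have hct := mul_le_mul_of_nonneg_right hc (by positivity : 0 ≤ x ^ 2 * y)
  linarith
end
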